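/- min{𝔰, 𝔟, od} = min{𝔰, 𝔟, θ*}, where od is the minimal cardinality of a τ-family that is not o-diagonalizable and θ* = min{θ_f : f : ℕ → ℕ with f(n) ≥ 2 for all n}. -/
import Mathlib


open Set Filter Cardinal
open scoped Classical

noncomputable section

/-- The Cantor space `2^ℕ`. -/
abbrev Cantor := ℕ → Bool

/-- Arrays: elements of `2^(ℕ×ℕ)`. -/
abbrev Arr := ℕ × ℕ → Bool

/-- A γ-array: every row is eventually 1. -/
def IsGammaArray (A : Arr) : Prop := ∀ n, ∀ᶠ m in atTop, A (n, m) = true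

/-- A γ-family: a set of γ-arrays. -/
def GammaFamily (𝒜 : Set Arr) : Prop := ∀ A ∈ 𝒜, IsGammaArray A

/-- A family of arrays is finitely τ-diagonalizable. -/
def FinTauDiag (𝒜 : Set Arr) : Prop :=
  ∃ F : ℕ → Finset ℕ,
    (∀ A ∈ 𝒜, ∃ᶠ n in atTop, ∃ m ∈ F n, A (n, m) = true) ∧
    (∀ A ∈ 𝒜, ∀ B ∈ 𝒜,
      (∀ᶠ n in atTop, ∀ m ∈ F n, A (n, m) ≤ B (n, m)) ∨
      (∀ᶠ n in atTop, ∀ m ∈ F n, B (n, m) ≤ A (n, m)))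

/-- A family of arrays is semi τ-diagonalizable (via a partial function with domain `D`). -/
def SemiTauDiag (𝒜 : Set Arr) : Prop :=
  ∃ (D : Set ℕ) (g : ℕ → ℕ),
    (∀ A ∈ 𝒜, ∃ᶠ n in atTop, n ∈ D ∧ A (n, g n) = true) ∧
    (∀ A ∈ 𝒜, ∀ B ∈ 𝒜,
      (∀ᶠ n in atTop, n ∈ D → A (n, g n) ≤ B (n, g n)) ∨
      (∀ᶠ n in atTop, n ∈ D → B (n, g n) ≤ A (n, g n)))

/-- A τ-family of arrays. -/
def TauFamily (𝒜 : Set Arr) : Prop :=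
  (∀ A ∈ 𝒜, ∀ n, ∃ᶠ m in atTop, A (n, m) = true) ∧
  (∀ A ∈ 𝒜, ∀ B ∈ 𝒜, ∀ n,
    (∀ᶠ m in atTop, A (n, m) ≤ B (n, m)) ∨
    (∀ᶠ m in atTop, B (n, m) ≤ A (n, m)))

/-- A family of arrays is τ-diagonalizable. -/
def TauDiag (𝒜 : Set Arr) : Prop :=
  ∃ g : ℕ → ℕ,
    (∀ A ∈ 𝒜, ∃ᶠ n in atTop, A (n, g n) = true) ∧
    (∀ A ∈ 𝒜, ∀ B ∈ 𝒜,
      (∀ᶠ n in atTop, A (n, g n) ≤ B (n, g n)) ∨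
      (∀ᶠ n in atTop, B (n, g n) ≤ A (n, g n)))

/-- A family of arrays is o-diagonalizable. -/
def ODiag (𝒜 : Set Arr) : Prop :=
  ∃ g : ℕ → ℕ, ∀ A ∈ 𝒜, ∃ n, A (n, g n) = true

/-- An ω-family of arrays: rows frequently 1 and, for each `n`,
the family of the `n`-th rows is centered. -/
def OmegaFamily (𝒜 : Set Arr) : Prop :=
  (∀ A ∈ 𝒜, ∀ n, ∃ᶠ m in atTop, A (n, m) = true) ∧
  (∀ n, ∀ 𝒜' ⊆ 𝒜, 𝒜'.Finite → {m | ∀ A ∈ 𝒜', A (n, m) = true}.Infinite)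

/-- The bounding number 𝔟. -/
def bNum : Cardinal :=
  sInf {c | ∃ F : Set (ℕ → ℕ), Cardinal.mk F = c ∧
    ¬ ∃ g : ℕ → ℕ, ∀ f ∈ F, ∀ᶠ n in atTop, f n ≤ g n}

/-- The splitting number 𝔰. -/
def sNum : Cardinal :=
  sInf {c | ∃ S : Set (Set ℕ), Cardinal.mk S = c ∧ (∀ s ∈ S, s.Infinite) ∧
    ∀ a : Set ℕ, a.Infinite → ∃ s ∈ S, (a ∩ s).Infinite ∧ (a \ s).Infinite}

/-- The tower number 𝔱. -/
def tNum : Cardinal :=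
  sInf {c | ∃ T : Set (Set ℕ), Cardinal.mk T = c ∧ (∀ t ∈ T, t.Infinite) ∧
    (∀ a ∈ T, ∀ b ∈ T, (a \ b).Finite ∨ (b \ a).Finite) ∧
    ¬ ∃ a : Set ℕ, a.Infinite ∧ ∀ t ∈ T, (a \ t).Finite}

/-- cov(M): the least number of meager sets covering the Baire space. -/
def covM : Cardinal :=
  sInf {c | ∃ 𝒞 : Set (Set (ℕ → ℕ)), Cardinal.mk 𝒞 = c ∧
    (∀ M ∈ 𝒞, IsMeagre M) ∧ ⋃₀ 𝒞 = Set.univ}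

/-- The o-diagonalization number: the minimal cardinality of a τ-family
which is not o-diagonalizable. -/
def odNum : Cardinal :=
  sInf {c | ∃ 𝒜 : Set Arr, Cardinal.mk 𝒜 = c ∧ TauFamily 𝒜 ∧ ¬ ODiag 𝒜}

section Covers

variable (α : Type*)

/-- A countable cover of the space `α`. -/
def CountCover (𝒰 : Set (Set α)) : Prop :=
  𝒰.Countable ∧ ⋃₀ 𝒰 = Set.univ ∧ Set.univ ∉ 𝒰

/-- A (countable) γ-cover. -/
def GammaCover (𝒰 : Set (Set α)) : Prop :=
  CountCover α 𝒰 ∧ 𝒰.Infinite ∧ ∀ x : α, {U | U ∈ 𝒰 ∧ x ∉ U}.Finite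

/-- A (countable) τ-cover. -/
def TauCover (𝒰 : Set (Set α)) : Prop :=
  CountCover α 𝒰 ∧ (∀ x : α, {U | U ∈ 𝒰 ∧ x ∈ U}.Infinite) ∧
  ∀ x y : α, {U | U ∈ 𝒰 ∧ x ∈ U ∧ y ∉ U}.Finite ∨ {U | U ∈ 𝒰 ∧ y ∈ U ∧ x ∉ U}.Finite

/-- A (countable) ω-cover. -/
def OmegaCover (𝒰 : Set (Set α)) : Prop :=
  CountCover α 𝒰 ∧ ∀ F : Set α, F.Finite → ∃ U ∈ 𝒰, F ⊆ U

variable [TopologicalSpace α]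

/-- All members are open. -/
def OpenFam (𝒰 : Set (Set α)) : Prop := ∀ U ∈ 𝒰, IsOpen U

/-- All members are clopen. -/
def ClopenFam (𝒰 : Set (Set α)) : Prop := ∀ U ∈ 𝒰, IsClopen U

/-- The class O of countable open covers. -/
def OCov (𝒰 : Set (Set α)) : Prop := CountCover α 𝒰 ∧ OpenFam α 𝒰
/-- The class Γ of countable open γ-covers. -/
def OGamma (𝒰 : Set (Set α)) : Prop := GammaCover α 𝒰 ∧ OpenFam α 𝒰
/-- The class Τ of countable open τ-covers. -/
def OTau (𝒰 : Set (Set α)) : Prop := TauCover α 𝒰 ∧ OpenFam α 𝒰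
/-- The class Ω of countable open ω-covers. -/
def OOmega (𝒰 : Set (Set α)) : Prop := OmegaCover α 𝒰 ∧ OpenFam α 𝒰

/-- The class C of countable clopen covers. -/
def KCov (𝒰 : Set (Set α)) : Prop := CountCover α 𝒰 ∧ ClopenFam α 𝒰
/-- The class C_Γ of countable clopen γ-covers. -/
def KGamma (𝒰 : Set (Set α)) : Prop := GammaCover α 𝒰 ∧ ClopenFam α 𝒰
/-- The class C_Τ of countable clopen τ-covers. -/
def KTau (𝒰 : Set (Set α)) : Prop := TauCover α 𝒰 ∧ ClopenFam α 𝒰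

end Covers

/-- The selection principle S1(𝒜,ℬ). -/
def S1 (α : Type*) (𝒜 ℬ : Set (Set α) → Prop) : Prop :=
  ∀ U : ℕ → Set (Set α), (∀ n, 𝒜 (U n)) →
    ∃ V : ℕ → Set α, (∀ n, V n ∈ U n) ∧ ℬ (range V)

/-- The selection principle Sfin(𝒜,ℬ). -/
def SFin (α : Type*) (𝒜 ℬ : Set (Set α) → Prop) : Prop :=
  ∀ U : ℕ → Set (Set α), (∀ n, 𝒜 (U n)) →
    ∃ F : ℕ → Set (Set α), (∀ n, (F n).Finite ∧ F n ⊆ U n) ∧ ℬ (⋃ n, F n)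

/-- The selection principle Ufin(𝒜,ℬ). -/
def UFin (α : Type*) (𝒜 ℬ : Set (Set α) → Prop) : Prop :=
  ∀ U : ℕ → Set (Set α), (∀ n, 𝒜 (U n)) →
    (∀ n, ¬ ∃ F : Set (Set α), F ⊆ U n ∧ F.Finite ∧ ⋃₀ F = Set.univ) →
    ∃ F : ℕ → Set (Set α), (∀ n, (F n).Finite ∧ F n ⊆ U n) ∧
      ℬ (range fun n => ⋃₀ F n)

/-- The critical cardinality non(P) of a property `P` of sets of reals:
the minimal cardinality of an infinite subset of the Cantor space not satisfying `P`. -/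
def nonP (P : Set Cantor → Prop) : Cardinal :=
  sInf {c | ∃ X : Set Cantor, X.Infinite ∧ ¬ P X ∧ Cardinal.mk X = c}

/-- The collection of cardinalities of witnessing families of `f`-sequences for `θ_f`. -/
def ThetaSet (f : ℕ → ℕ) : Set Cardinal :=
  {c | ∃ ℱ : Set (ℕ → Set ℕ), Cardinal.mk ℱ = c ∧
    (∀ σ ∈ ℱ, ∀ n, σ n ⊆ Iio (f n)) ∧
    (∀ σ ∈ ℱ, ∀ᶠ n in atTop, (σ n).Nonempty) ∧
    (∀ σ ∈ ℱ, ∀ η ∈ ℱ, (∀ᶠ n in atTop, σ n ⊆ η n) ∨ (∀ᶠ n in atTop, η n ⊆ σ n)) ∧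
    ¬ ∃ g : ℕ → ℕ, ∀ σ ∈ ℱ, ∃ n, g n ∈ σ n}

/-- The cardinal θ_f; equal to 𝔠⁺ if no witnessing family exists. -/
def theta (f : ℕ → ℕ) : Cardinal :=
  if (ThetaSet f).Nonempty then sInf (ThetaSet f) else Order.succ Cardinal.continuum

/-- θ* = min over f (with all values ≥ 2) of θ_f. -/
def thetaStar : Cardinal :=
  sInf {c | ∃ f : ℕ → ℕ, (∀ n, 2 ≤ f n) ∧ theta f = c}

/-- The collection of cardinalities of witnessing families for `𝔈_f`. -/
def ESet (f : ℕ → ℕ) : Set Cardinal :=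
  {c | ∃ F : Set (ℕ → ℕ), Cardinal.mk F = c ∧ (∀ h ∈ F, ∀ n, h n < f n) ∧
    ∀ g : ℕ → ℕ, ∃ h ∈ F, ∀ n, h n ≠ g n}

/-- The cardinal 𝔈_f; equal to 𝔠⁺ if no witnessing family exists. -/
def ENum (f : ℕ → ℕ) : Cardinal :=
  if (ESet f).Nonempty then sInf (ESet f) else Order.succ Cardinal.continuum

/-- 𝔈* = min over f (with all values ≥ 1) of 𝔈_f. -/
def EStar : Cardinal :=
  sInf {c | ∃ f : ℕ → ℕ, (∀ n, 1 ≤ f n) ∧ ENum f = c}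


lemma exists_dominating {F : Set (ℕ → ℕ)} (h : Cardinal.mk F < bNum) :
    ∃ g : ℕ → ℕ, ∀ f ∈ F, ∀ᶠ n in atTop, f n ≤ g n := by
  by_contra hc
  have : bNum ≤ Cardinal.mk F := by unfold bNum; exact csInf_le' ⟨F, rfl, hc⟩
  exact absurd this (not_le.2 h)

lemma exists_unsplit {S : Set (Set ℕ)} (hinf : ∀ s ∈ S, s.Infinite)
    (h : Cardinal.mk S < sNum) :
    ∃ a : Set ℕ, a.Infinite ∧ ∀ s ∈ S, ¬((a ∩ s).Infinite ∧ (a \ s).Infinite) := by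
  by_contra hc
  push_neg at hc
  have : sNum ≤ Cardinal.mk S := by
    unfold sNum
    refine csInf_le' ⟨S, rfl, hinf, fun a ha => ?_⟩
    obtain ⟨s, hs, h1, h2⟩ := hc a ha
    exact ⟨s, hs, h1, h2⟩
  exact absurd this (not_le.2 h)

lemma countable_ODiag {𝒜 : Set Arr} (hc : 𝒜.Countable)
    (h1 : ∀ A ∈ 𝒜, ∀ n, ∃ᶠ m in atTop, A (n, m) = true) : ODiag 𝒜 := by
  rcases Set.eq_empty_or_nonempty 𝒜 with he | hne
  · exact ⟨fun _ => 0, by simp [he]⟩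
  obtain ⟨e, he⟩ := (Set.countable_iff_exists_surjective hne).1 hc
  choose m hm using fun n => ((h1 (e n) (e n).2 n).exists)
  refine ⟨m, fun A hA => ?_⟩
  obtain ⟨n, hn⟩ := he ⟨A, hA⟩
  exact ⟨n, by rw [show A = (e n : Arr) from congrArg Subtype.val hn.symm]; exact hm n⟩

def Phi0 : (ℕ → ℕ) → Arr := fun h p => decide (h p.1 < p.2)

lemma tau_phi0 : TauFamily (Set.range Phi0) ∧ ¬ ODiag (Set.range Phi0) := by
  refine ⟨⟨?_, ?_⟩, ?_⟩
  · rintro A ⟨h, rfl⟩ n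
    rw [frequently_atTop]
    intro N
    exact ⟨max N (h n + 1), le_max_left _ _,
      decide_eq_true (lt_of_lt_of_le (Nat.lt_succ_self _) (le_max_right _ _))⟩
  · rintro A ⟨h, rfl⟩ B ⟨h', rfl⟩ n
    rcases le_total (h n) (h' n) with hle | hle
    · refine Or.inr (Eventually.of_forall fun m => ?_)
      rw [Bool.le_iff_imp]
      simp only [Phi0, decide_eq_true_eq]
      omega
    · refine Or.inl (Eventually.of_forall fun m => ?_)
      rw [Bool.le_iff_imp]
      simp only [Phi0, decide_eq_true_eq]
      omega
  · rintro ⟨g, hg⟩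
    obtain ⟨n, hn⟩ := hg (Phi0 g) ⟨g, rfl⟩
    simp only [Phi0, decide_eq_true_eq] at hn
    omega

lemma odNum_mem : odNum ∈ {c | ∃ 𝒜 : Set Arr, Cardinal.mk 𝒜 = c ∧ TauFamily 𝒜 ∧ ¬ ODiag 𝒜} :=
  csInf_mem ⟨_, Set.range Phi0, rfl, tau_phi0.1, tau_phi0.2⟩

lemma odNum_le_continuum : odNum ≤ Cardinal.continuum := by
  refine le_trans (csInf_le' ⟨Set.range Phi0, rfl, tau_phi0.1, tau_phi0.2⟩) ?_
  refine le_trans Cardinal.mk_range_le ?_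
  rw [← Cardinal.power_def, Cardinal.mk_denumerable, aleph0_power_aleph0]


-- block sums
def FS (f : ℕ → ℕ) : ℕ → ℕ := fun k => ∑ i ∈ Finset.range k, f i

lemma FS_mono (f : ℕ → ℕ) : Monotone (FS f) := fun a b h =>
  Finset.sum_le_sum_of_subset (Finset.range_subset_range.2 h)

lemma FS_succ (f : ℕ → ℕ) (k : ℕ) : FS f (k + 1) = FS f k + f k :=
  Finset.sum_range_succ f k

lemma le_FS (f : ℕ → ℕ) (hf : ∀ n, 1 ≤ f n) (k : ℕ) : k ≤ FS f k := by
  induction k with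
  | zero => simp [FS]
  | succ k ih => rw [FS_succ]; have := hf k; omega

def kOf (f : ℕ → ℕ) (m : ℕ) : ℕ := Nat.findGreatest (fun k => FS f k ≤ m) m

lemma kOf_le (f : ℕ → ℕ) (m : ℕ) : FS f (kOf f m) ≤ m := by
  refine Nat.findGreatest_spec (P := fun k => FS f k ≤ m) (Nat.zero_le m) ?_
  simp [FS]

lemma kOf_lt (f : ℕ → ℕ) (hf : ∀ n, 1 ≤ f n) (m : ℕ) : m < FS f (kOf f m + 1) := by
  by_cases h : kOf f m + 1 ≤ m
  · have h0 := Nat.findGreatest_is_greatest (P := fun k => FS f k ≤ m)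
      (Nat.lt_succ_self (kOf f m)) h
    have h1 : ¬ (FS f (kOf f m + 1) ≤ m) := by
      simpa only [Nat.succ_eq_add_one] using h0
    omega
  · have h1 : kOf f m ≤ m := Nat.findGreatest_le m
    have h2 : m ≤ kOf f m := by omega
    have := le_FS f hf (kOf f m + 1)
    omega

lemma kOf_unique (f : ℕ → ℕ) (hf : ∀ n, 1 ≤ f n) {k m : ℕ}
    (h1 : FS f k ≤ m) (h2 : m < FS f (k + 1)) : kOf f m = k := by
  rcases lt_trichotomy (kOf f m) k with h | h | h
  · have hk : k ≤ m := le_trans (le_FS f hf k) h1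
    exact absurd h1 (Nat.findGreatest_is_greatest (P := fun k => FS f k ≤ m) h hk)
  · exact h
  · have : FS f (k + 1) ≤ FS f (kOf f m) := FS_mono f h
    have := kOf_le f m
    omega

/-- The array coded by an `f`-sequence. -/
def PhiT (f : ℕ → ℕ) : (ℕ → Set ℕ) → Arr := fun σ p =>
  decide ((Nat.unpair (kOf f p.2)).1 = p.1 ∧ (p.2 - FS f (kOf f p.2)) ∈ σ (kOf f p.2))

lemma odNum_le_theta (f : ℕ → ℕ) (hf : ∀ n, 2 ≤ f n) : odNum ≤ theta f := by
  have hf1 : ∀ n, 1 ≤ f n := fun n => le_trans (by norm_num) (hf n)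
  unfold theta
  split_ifs with hne
  · obtain ⟨ℱ, hcard, hIio, hnon, hchain, hnodiag⟩ := csInf_mem hne
    rw [← hcard]
    refine le_trans ?_ (Cardinal.mk_image_le (f := PhiT f) (s := ℱ))
    unfold odNum
    refine csInf_le' ⟨PhiT f '' ℱ, rfl, ⟨?_, ?_⟩, ?_⟩
    · -- rows frequently true
      rintro A ⟨σ, hσ, rfl⟩ n
      rw [frequently_atTop]
      intro N
      obtain ⟨N₁, hN₁⟩ := eventually_atTop.1 (hnon σ hσ)
      set k := Nat.pair n (max N N₁) with hk
      have hk2 : max N N₁ ≤ k := Nat.right_le_pair _ _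
      obtain ⟨j, hj⟩ := hN₁ k (le_trans (le_max_right _ _) hk2)
      have hjf : j < f k := hIio σ hσ k hj
      have hdec : kOf f (FS f k + j) = k :=
        kOf_unique f hf1 (Nat.le_add_right _ _) (by rw [FS_succ]; omega)
      refine ⟨FS f k + j, ?_, ?_⟩
      · have := le_FS f hf1 k
        omega
      · apply decide_eq_true
        rw [hdec, hk]
        constructor
        · rw [Nat.unpair_pair]
        · simpa using hj
    · -- rows comparable
      rintro A ⟨σ, hσ, rfl⟩ B ⟨η, hη, rfl⟩ n
      have key : ∀ σ η : ℕ → Set ℕ, (∀ᶠ k in atTop, σ k ⊆ η k) →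
          ∀ᶠ m in atTop, PhiT f σ (n, m) ≤ PhiT f η (n, m) := by
        intro σ η h
        obtain ⟨K, hK⟩ := eventually_atTop.1 h
        refine eventually_atTop.2 ⟨FS f K, fun m hm => ?_⟩
        rw [Bool.le_iff_imp]
        intro hA
        rw [PhiT, decide_eq_true_eq] at hA ⊢
        have hKk : K ≤ kOf f m := by
          by_contra hcon
          have : FS f (kOf f m + 1) ≤ FS f K := FS_mono f (by omega)
          have := kOf_lt f hf1 m
          omega
        exact ⟨hA.1, hK _ hKk hA.2⟩
      rcases hchain σ hσ η hη with h | h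
      · exact Or.inl (key σ η h)
      · exact Or.inr (key η σ h)
    · -- not o-diagonalizable
      rintro ⟨g, hg⟩
      refine hnodiag ⟨fun k => g ((Nat.unpair k).1) - FS f k, fun σ hσ => ?_⟩
      obtain ⟨n, hn⟩ := hg _ ⟨σ, hσ, rfl⟩
      rw [PhiT, decide_eq_true_eq] at hn
      dsimp only at hn
      refine ⟨kOf f (g n), ?_⟩
      show g (Nat.unpair (kOf f (g n))).1 - FS f (kOf f (g n)) ∈ σ (kOf f (g n))
      rw [hn.1]
      exact hn.2
  · exact odNum_le_continuum.trans (Order.lt_succ _).le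


/-- least witness above `j` in row `n`. -/
def nxt (A : Arr) (n j : ℕ) : ℕ :=
  if h : ∃ m, j < m ∧ A (n, m) = true then Nat.find h else 0
/-- bound for next witnesses in rows `≤ j`. -/
def rowB (A : Arr) (j : ℕ) : ℕ := (Finset.range (j + 1)).sup (fun n => nxt A n j)
/-- threshold for row-`k` domination. -/
def tab (A B : Arr) (k : ℕ) : ℕ :=
  if h : ∃ N, ∀ m, N ≤ m → A (k, m) ≤ B (k, m) then Nat.find h else 0
/-- bound for thresholds for rows `≤ j`. -/
def TAB (A B : Arr) (j : ℕ) : ℕ := (Finset.range (j + 1)).sup (fun k => tab A B k)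

lemma bound_of_finite {s : Set ℕ} (h : s.Finite) : ∃ K, ∀ x ∈ s, x ≤ K := by
  obtain ⟨K, hK⟩ := h.bddAbove
  exact ⟨K, fun x hx => hK hx⟩

lemma thetaStar_le_odNum (hs : odNum < sNum) (hb : odNum < bNum) : thetaStar ≤ odNum := by
  obtain ⟨𝒜, hcard, hτ, hno⟩ := odNum_mem
  have hκ : ℵ₀ ≤ Cardinal.mk 𝒜 := by
    by_contra h
    exact hno (countable_ODiag
      (Set.countable_coe_iff.1 (Cardinal.mk_le_aleph0_iff.1 (le_of_not_ge h))) hτ.1)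
  -- the direction sets
  set sAB : Arr → Arr → Set ℕ := fun A B => {k | ∀ᶠ m in atTop, A (k, m) ≤ B (k, m)}
    with hsAB_def
  set S' : Set (Set ℕ) := {s | s.Infinite ∧ ∃ A ∈ 𝒜, ∃ B ∈ 𝒜, s = sAB A B} with hS'_def
  have hScard : Cardinal.mk S' < sNum := by
    refine lt_of_le_of_lt ?_ (lt_of_le_of_lt (le_of_eq hcard) hs)
    have h1 : S' ⊆ Set.range (fun p : ↥𝒜 × ↥𝒜 => sAB p.1.1 p.2.1) := by
      rintro s ⟨_, A, hA, B, hB, rfl⟩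
      exact ⟨⟨⟨A, hA⟩, ⟨B, hB⟩⟩, rfl⟩
    refine le_trans (Cardinal.mk_le_mk_of_subset h1) (le_trans Cardinal.mk_range_le ?_)
    have h2 : #(↥𝒜 × ↥𝒜) = #↥𝒜 * #↥𝒜 := by simp
    rw [h2, Cardinal.mul_eq_self hκ]
  obtain ⟨a, ha_inf, ha⟩ := exists_unsplit (fun s hs => hs.1) hScard
  -- uniform directions along a
  have hdir : ∀ A ∈ 𝒜, ∀ B ∈ 𝒜,
      (∃ K, ∀ k ∈ a, K ≤ k → ∀ᶠ m in atTop, A (k, m) ≤ B (k, m)) ∨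
      (∃ K, ∀ k ∈ a, K ≤ k → ∀ᶠ m in atTop, B (k, m) ≤ A (k, m)) := by
    intro A hA B hB
    by_cases hfin : (a ∩ sAB A B).Infinite
    · have hsinf : (sAB A B).Infinite := Set.Infinite.mono Set.inter_subset_right hfin
      have hun := ha (sAB A B) ⟨hsinf, A, hA, B, hB, rfl⟩
      have hdf : (a \ sAB A B).Finite := by
        by_contra hdf
        exact hun ⟨hfin, hdf⟩
      obtain ⟨K, hK⟩ := bound_of_finite hdf
      refine Or.inl ⟨K + 1, fun k hk hkK => ?_⟩
      by_contra h
      have : k ∈ a \ sAB A B := ⟨hk, h⟩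
      have := hK k this
      omega
    · have hfin' : (a ∩ sAB A B).Finite := Set.not_infinite.1 hfin
      obtain ⟨K, hK⟩ := bound_of_finite hfin'
      refine Or.inr ⟨K + 1, fun k hk hkK => ?_⟩
      rcases hτ.2 A hA B hB k with h | h
      · have : k ∈ a ∩ sAB A B := ⟨hk, h⟩
        have := hK k this
        omega
      · exact h
  -- frequent witnesses
  have hfreq : ∀ A ∈ 𝒜, ∀ n j, ∃ m, j < m ∧ A (n, m) = true := by
    intro A hA n j
    obtain ⟨m, hm1, hm2⟩ := (frequently_atTop.1 (hτ.1 A hA n)) (j + 1)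
    exact ⟨m, by omega, hm2⟩
  -- dominating function
  have hFcard : Cardinal.mk ↥(Set.range (fun x : ↥𝒜 ⊕ ↥𝒜 × ↥𝒜 =>
      Sum.elim (fun A : ↥𝒜 => rowB A.1) (fun p : ↥𝒜 × ↥𝒜 => TAB p.1.1 p.2.1) x)) < bNum := by
    refine lt_of_le_of_lt (le_trans Cardinal.mk_range_le ?_)
      (lt_of_le_of_lt (le_of_eq hcard) hb)
    have h2 : #(↥𝒜 ⊕ ↥𝒜 × ↥𝒜) = #↥𝒜 + #↥𝒜 * #↥𝒜 := by simp
    rw [h2, Cardinal.mul_eq_self hκ, Cardinal.add_eq_self hκ]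
  obtain ⟨g₀, hg₀⟩ := exists_dominating hFcard
  have hg₀A : ∀ A ∈ 𝒜, ∃ N, ∀ j, N ≤ j → rowB A j ≤ g₀ j := by
    intro A hA
    obtain ⟨N, hN⟩ := eventually_atTop.1 (hg₀ _ ⟨Sum.inl ⟨A, hA⟩, rfl⟩)
    exact ⟨N, fun j hj => hN j hj⟩
  have hg₀T : ∀ A ∈ 𝒜, ∀ B ∈ 𝒜, ∃ N, ∀ j, N ≤ j → TAB A B j ≤ g₀ j := by
    intro A hA B hB
    obtain ⟨N, hN⟩ := eventually_atTop.1 (hg₀ _ ⟨Sum.inr ⟨⟨A, hA⟩, ⟨B, hB⟩⟩, rfl⟩)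
    exact ⟨N, fun j hj => hN j hj⟩
  -- the fast function e
  set e : ℕ → ℕ := fun j => j + 2 + (Finset.range (j + 1)).sup g₀ with he_def
  have he_mono : Monotone e := by
    intro x y h
    exact add_le_add (by omega) (Finset.sup_mono (Finset.range_subset_range.2 (by omega)))
  have he_ge : ∀ j, g₀ j ≤ e j := by
    intro j
    have := Finset.le_sup (f := g₀) (Finset.self_mem_range_succ j)
    simp only [he_def]
    omega
  have he_gt : ∀ j, j + 2 ≤ e j := fun j => by simp only [he_def]; omega
  -- enumeration of a
  set kk : ℕ → ℕ := Nat.nth (· ∈ a) with hkk_def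
  have hkk_mono : StrictMono kk := Nat.nth_strictMono ha_inf
  have hkk_mem : ∀ t, kk t ∈ a := fun t => Nat.nth_mem_of_infinite ha_inf t
  have hkk_ge : ∀ t, t ≤ kk t := fun t => hkk_mono.le_apply
  -- interval endpoints
  set ii : ℕ → ℕ := fun t => Nat.rec (e (kk 0)) (fun t prev => e (max prev (kk (t + 1)))) t
    with hii_def
  have hii_succ : ∀ t, ii (t + 1) = e (max (ii t) (kk (t + 1))) := fun t => rfl
  have hii_lt : ∀ t, ii t + 2 ≤ ii (t + 1) := by
    intro t
    rw [hii_succ]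
    have h1 := he_gt (max (ii t) (kk (t + 1)))
    have h2 := le_max_left (ii t) (kk (t + 1))
    omega
  have hii_k : ∀ t, kk t + 2 ≤ ii t := by
    intro t
    cases t with
    | zero => exact he_gt (kk 0)
    | succ s =>
      rw [hii_succ]
      have h1 := he_gt (max (ii s) (kk (s + 1)))
      have h2 := le_max_right (ii s) (kk (s + 1))
      omega
  have hii_ge : ∀ t, t ≤ ii t := by
    intro t
    induction t with
    | zero => omega
    | succ s ih => have := hii_lt s; omega
  have hii_e : ∀ t, e (ii t) ≤ ii (t + 1) := by
    intro t
    rw [hii_succ]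
    exact he_mono (le_max_left _ _)
  have hii_ek : ∀ t, e (kk (t + 1)) ≤ ii (t + 1) := by
    intro t
    rw [hii_succ]
    exact he_mono (le_max_right _ _)
  -- the sequence family
  set fseq : ℕ → ℕ := fun t => ii (t + 1) - ii t with hfseq_def
  have hf2 : ∀ t, 2 ≤ fseq t := by
    intro t
    have := hii_lt t
    simp only [hfseq_def]
    omega
  set Sig : Arr → ℕ → Set ℕ :=
    fun A t => {d | d < fseq t ∧ A (kk t, ii t + 1 + d) = true} with hSig_def
  -- chain key
  have key : ∀ A ∈ 𝒜, ∀ B ∈ 𝒜,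
      (∃ K, ∀ k ∈ a, K ≤ k → ∀ᶠ m in atTop, A (k, m) ≤ B (k, m)) →
      ∀ᶠ t in atTop, Sig A t ⊆ Sig B t := by
    rintro A hA B hB ⟨K, hK⟩
    obtain ⟨N', hN'⟩ := hg₀T A hA B hB
    refine eventually_atTop.2 ⟨max K N' + 1, fun t ht => ?_⟩
    rintro d ⟨hd1, hd2⟩
    have hka : kk t ∈ a := hkk_mem t
    have htk : t ≤ kk t := hkk_ge t
    have hk1 : K ≤ kk t := by omega
    have hEv := hK (kk t) hka hk1
    have hEx : ∃ N, ∀ m, N ≤ m → A (kk t, m) ≤ B (kk t, m) := by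
      obtain ⟨N, hN⟩ := eventually_atTop.1 hEv
      exact ⟨N, fun m hm => hN m hm⟩
    have htab : tab A B (kk t) = Nat.find hEx := dif_pos hEx
    have hspec := Nat.find_spec hEx
    have h2 : tab A B (kk t) ≤ TAB A B (kk t) :=
      Finset.le_sup (f := fun k => tab A B k) (Finset.self_mem_range_succ (kk t))
    have h3 : TAB A B (kk t) ≤ g₀ (kk t) := hN' (kk t) (by omega)
    have h4 : g₀ (kk t) ≤ e (kk t) := he_ge _
    obtain ⟨s, rfl⟩ : ∃ s, t = s + 1 := ⟨t - 1, by omega⟩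
    have h5 : e (kk (s + 1)) ≤ ii (s + 1) := hii_ek s
    have h6 : tab A B (kk (s + 1)) ≤ ii (s + 1) := by omega
    have hle : A (kk (s + 1), ii (s + 1) + 1 + d) ≤ B (kk (s + 1), ii (s + 1) + 1 + d) := by
      rw [htab] at h6
      exact hspec (ii (s + 1) + 1 + d) (by omega)
    exact ⟨hd1, Bool.le_iff_imp.1 hle hd2⟩
  -- membership in ThetaSet
  have hmem : Cardinal.mk ↥(Sig '' 𝒜) ∈ ThetaSet fseq := by
    refine ⟨Sig '' 𝒜, rfl, ?_, ?_, ?_, ?_⟩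
    · rintro σ ⟨A, hA, rfl⟩ t d hd
      exact Set.mem_Iio.2 hd.1
    · rintro σ ⟨A, hA, rfl⟩
      obtain ⟨N, hN⟩ := hg₀A A hA
      refine eventually_atTop.2 ⟨N, fun t ht => ?_⟩
      have hNii : N ≤ ii t := le_trans ht (hii_ge t)
      have hex : ∃ m, ii t < m ∧ A (kk t, m) = true := hfreq A hA (kk t) (ii t)
      have hnxt_eq : nxt A (kk t) (ii t) = Nat.find hex := dif_pos hex
      obtain ⟨hm1, hm2⟩ := Nat.find_spec hex
      have hk2 : kk t + 2 ≤ ii t := hii_k t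
      have h2 : nxt A (kk t) (ii t) ≤ rowB A (ii t) :=
        Finset.le_sup (f := fun n => nxt A n (ii t)) (Finset.mem_range.2 (by omega))
      have h3 : rowB A (ii t) ≤ g₀ (ii t) := hN (ii t) hNii
      have h4 : g₀ (ii t) ≤ e (ii t) := he_ge _
      have h5 : e (ii t) ≤ ii (t + 1) := hii_e t
      have h6 : Nat.find hex ≤ ii (t + 1) := by omega
      refine ⟨Nat.find hex - ii t - 1, ?_, ?_⟩
      · show Nat.find hex - ii t - 1 < fseq t
        have := hii_lt t
        simp only [hfseq_def]
        omega
      · have harg : ii t + 1 + (Nat.find hex - ii t - 1) = Nat.find hex := by omega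
        rw [harg]
        exact hm2
    · rintro σ ⟨A, hA, rfl⟩ η ⟨B, hB, rfl⟩
      rcases hdir A hA B hB with h | h
      · exact Or.inl (key A hA B hB h)
      · exact Or.inr (key B hB A hA h)
    · rintro ⟨g, hg⟩
      refine hno ⟨fun n => if h : ∃ t, kk t = n then ii h.choose + 1 + g h.choose else 0,
        fun A hA => ?_⟩
      obtain ⟨t, ht1, ht2⟩ := hg (Sig A) ⟨A, hA, rfl⟩
      have hex : ∃ t', kk t' = kk t := ⟨t, rfl⟩
      have hch : hex.choose = t := hkk_mono.injective hex.choose_spec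
      refine ⟨kk t, ?_⟩
      show A (kk t, dite (∃ t', kk t' = kk t)
        (fun h => ii h.choose + 1 + g h.choose) (fun _ => 0)) = true
      rw [dif_pos hex, hch]
      exact ht2
  -- conclude
  calc thetaStar ≤ theta fseq := csInf_le' ⟨fseq, hf2, rfl⟩
    _ ≤ Cardinal.mk ↥(Sig '' 𝒜) := by
        unfold theta
        rw [if_pos ⟨_, hmem⟩]
        exact csInf_le' hmem
    _ ≤ Cardinal.mk ↥𝒜 := Cardinal.mk_image_le
    _ = odNum := hcard


/-- min{𝔰,𝔟,od} = min{𝔰,𝔟,θ*}. -/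
theorem stmt18 : min sNum (min bNum odNum) = min sNum (min bNum thetaStar) := by
  have h1 : odNum ≤ thetaStar :=
    le_csInf ⟨theta (fun _ => 2), fun _ => 2, fun _ => le_rfl, rfl⟩
      (by rintro c ⟨f, hf, rfl⟩; exact odNum_le_theta f hf)
  apply le_antisymm
  · exact min_le_min le_rfl (min_le_min le_rfl h1)
  · refine le_min (min_le_left _ _)
      (le_min (le_trans (min_le_right _ _) (min_le_left _ _)) ?_)
    rcases le_or_gt sNum odNum with h | hS
    · exact le_trans (min_le_left _ _) h
    rcases le_or_gt bNum odNum with h | hB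
    · exact le_trans (le_trans (min_le_right _ _) (min_le_left _ _)) h
    · exact le_trans (le_trans (min_le_right _ _) (min_le_right _ _))
        (thetaStar_le_odNum hS hB)

end
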